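/- Let Φ₀ : SO(2) × SO(2) → [0,∞) arise as the jump energy density of an L¹-lower semicontinuous functional F₀(A) = ∫_{J_A} Φ₀(A⁺, A⁻) dℋ¹ defined on micro-rotations on a planar domain. If F₀ is lower semicontinuous with respect to L¹ convergence of micro-rotations, then Φ₀ is subadditive in the sense that Φ₀(R₁, R₃) ≤ Φ₀(R₁, R₂) + Φ₀(R₂, R₃) for all R₁, R₂, R₃ ∈ SO(2). -/

import Mathlib

open MeasureTheory Metric Set Filter
open scoped Matrix

/-- Frobenius norm of a 2×2 real matrix. -/
noncomputable def frob (M : Matrix (Fin 2) (Fin 2) ℝ) : ℝ :=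
  Real.sqrt (∑ i, ∑ j, (M i j) ^ 2)

/-- The rotation group SO(2) as a set of 2×2 matrices. -/
def SO2 : Set (Matrix (Fin 2) (Fin 2) ℝ) := {R | R * R.transpose = 1 ∧ R.det = 1}

/-- The square `Ω = (−1,1)²` in the plane (coordinates indexed by `Fin 2`). -/
def squareDomain : Set (Fin 2 → ℝ) := {x | ∀ i, x i ∈ Set.Ioo (-1 : ℝ) 1}

/-!
Put a layer of `R₂` of thickness `tₖ → 0` at the interface of the two-grain field `R₁ | R₃`.
The three-grain fields differ from the two-grain one only on a strip of area `2 tₖ`, so they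
converge to it in `L¹(Ω)`, while their energy is constantly `2 Φ₀(R₁,R₂) + 2 Φ₀(R₂,R₃)`.
Lower semicontinuity bounds `2 Φ₀(R₁,R₃)` by this constant.
-/

open scoped Topology

lemma frob_nonneg (M : Matrix (Fin 2) (Fin 2) ℝ) : 0 ≤ frob M := Real.sqrt_nonneg _

@[simp] lemma frob_zero : frob 0 = 0 := by simp [frob]

lemma frob_threeLayer_sub_twoLayer (R₁ R₂ R₃ : Matrix (Fin 2) (Fin 2) ℝ) (s t : ℝ)
    (x : Fin 2 → ℝ) :
    frob ((if x 0 < s then R₁ else if x 0 < t then R₂ else R₃) - (if x 0 < s then R₁ else R₃)) =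
      {x : Fin 2 → ℝ | x 0 ∈ Ico s t}.indicator (fun _ => frob (R₂ - R₃)) x := by
  by_cases hs : x 0 < s
  · simp [hs]
  · by_cases ht : x 0 < t <;> simp [hs, ht, not_lt.mp hs]

lemma measurableSet_strip (a b : ℝ) : MeasurableSet {x : Fin 2 → ℝ | x 0 ∈ Ico a b} :=
  measurable_pi_apply 0 measurableSet_Ico

lemma volume_squareDomain_inter_strip_le (a b : ℝ) :
    volume (squareDomain ∩ {x : Fin 2 → ℝ | x 0 ∈ Ico a b}) ≤ ENNReal.ofReal (2 * (b - a)) := by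
  have hsub : squareDomain ∩ {x : Fin 2 → ℝ | x 0 ∈ Ico a b} ⊆
      univ.pi (fun i : Fin 2 => if i = 0 then Ico a b else Ioo (-1 : ℝ) 1) := by
    rintro x ⟨hsq, hstrip⟩ i -
    fin_cases i
    · simpa using hstrip
    · simpa using hsq 1
  calc volume (squareDomain ∩ {x : Fin 2 → ℝ | x 0 ∈ Ico a b})
      ≤ volume (univ.pi (fun i : Fin 2 => if i = 0 then Ico a b else Ioo (-1 : ℝ) 1)) :=
        measure_mono hsub
    _ = ENNReal.ofReal (2 * (b - a)) := by
        rw [volume_pi_pi, Fin.prod_univ_two, ENNReal.ofReal_mul zero_le_two, mul_comm]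
        norm_num [Real.volume_Ico, Real.volume_Ioo]

lemma setIntegral_squareDomain_strip_indicator_le {c : ℝ} (hc : 0 ≤ c) {a b : ℝ} (hab : a ≤ b) :
    ∫ x in squareDomain, {x : Fin 2 → ℝ | x 0 ∈ Ico a b}.indicator (fun _ => c) x ≤
      c * (2 * (b - a)) := by
  rw [setIntegral_indicator (measurableSet_strip a b), setIntegral_const, smul_eq_mul, mul_comm]
  gcongr
  exact ENNReal.toReal_le_of_le_ofReal (by linarith) (volume_squareDomain_inter_strip_le a b)

lemma tendsto_integral_frob_threeLayer_sub_twoLayer (R₁ R₂ R₃ : Matrix (Fin 2) (Fin 2) ℝ)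
    (s : ℝ) {t : ℕ → ℝ} (hst : ∀ k, s ≤ t k) (ht : Tendsto t atTop (𝓝 s)) :
    Tendsto (fun k => ∫ x in squareDomain,
        frob ((if x 0 < s then R₁ else if x 0 < t k then R₂ else R₃) -
          (if x 0 < s then R₁ else R₃))) atTop (𝓝 0) := by
  simp_rw [frob_threeLayer_sub_twoLayer]
  have hbound : Tendsto (fun k => frob (R₂ - R₃) * (2 * (t k - s))) atTop (𝓝 0) := by
    simpa using ((ht.sub_const s).const_mul 2).const_mul (frob (R₂ - R₃))
  refine squeeze_zero (fun k => integral_nonneg fun x => ?_)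
    (fun k => setIntegral_squareDomain_strip_indicator_le (frob_nonneg _) (hst k)) hbound
  exact indicator_nonneg (fun _ _ => frob_nonneg _) x

theorem jump_density_subadditive_general
    (Φ₀ : Matrix (Fin 2) (Fin 2) ℝ → Matrix (Fin 2) (Fin 2) ℝ → ℝ)
    (F : ((Fin 2 → ℝ) → Matrix (Fin 2) (Fin 2) ℝ) → ℝ)
    (hF2 : ∀ R R', R ∈ SO2 → R' ∈ SO2 → ∀ t ∈ Set.Ioo (-1 : ℝ) 1,
      F (fun x => if x 0 < t then R else R') = 2 * Φ₀ R R')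
    (hF3 : ∀ R₁ R₂ R₃, R₁ ∈ SO2 → R₂ ∈ SO2 → R₃ ∈ SO2 →
      ∀ s t : ℝ, -1 < s → s < t → t < 1 →
        F (fun x => if x 0 < s then R₁ else if x 0 < t then R₂ else R₃) =
          2 * Φ₀ R₁ R₂ + 2 * Φ₀ R₂ R₃)
    (hlsc : ∀ (A : ℕ → (Fin 2 → ℝ) → Matrix (Fin 2) (Fin 2) ℝ)
        (A₀ : (Fin 2 → ℝ) → Matrix (Fin 2) (Fin 2) ℝ),
      Tendsto (fun k => ∫ x in squareDomain, frob (A k x - A₀ x)) atTop (nhds 0) →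
      F A₀ ≤ Filter.liminf (fun k => F (A k)) atTop) :
    ∀ R₁ R₂ R₃, R₁ ∈ SO2 → R₂ ∈ SO2 → R₃ ∈ SO2 →
      Φ₀ R₁ R₃ ≤ Φ₀ R₁ R₂ + Φ₀ R₂ R₃ := by
  intro R₁ R₂ R₃ h₁ h₂ h₃
  obtain ⟨t, -, ht, ht_lim⟩ := exists_seq_strictAnti_tendsto' (zero_lt_one' ℝ)
  have hlim := hlsc _ _ (tendsto_integral_frob_threeLayer_sub_twoLayer R₁ R₂ R₃ 0
    (fun k => (ht k).1.le) ht_lim)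
  rw [hF2 R₁ R₃ h₁ h₃ 0 (by norm_num)] at hlim
  simp_rw [hF3 R₁ R₂ R₃ h₁ h₂ h₃ 0 (t _) (by norm_num) (ht _).1 (ht _).2, liminf_const] at hlim
  linarith

/-- Subadditivity of the jump energy density from lower semicontinuity: let `F₀` be an
interfacial energy on planar matrix fields on `Ω = (−1,1)²` such that on a two-grain
layered micro-rotation with a vertical interface of length 2 it takes the value
`2·Φ₀(R,R')`, on a three-grain layered micro-rotation it takes the value
`2·Φ₀(R₁,R₂) + 2·Φ₀(R₂,R₃)`, and which is lower semicontinuous with respect to `L¹(Ω)`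
convergence.  Then `Φ₀` is subadditive: `Φ₀(R₁,R₃) ≤ Φ₀(R₁,R₂) + Φ₀(R₂,R₃)` on SO(2). -/
theorem jump_density_subadditive
    (Φ₀ : Matrix (Fin 2) (Fin 2) ℝ → Matrix (Fin 2) (Fin 2) ℝ → ℝ)
    (hΦ₀ : ∀ R R', 0 ≤ Φ₀ R R')
    (F : ((Fin 2 → ℝ) → Matrix (Fin 2) (Fin 2) ℝ) → ℝ)
    (hF2 : ∀ R R', R ∈ SO2 → R' ∈ SO2 → ∀ t ∈ Set.Ioo (-1 : ℝ) 1,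
      F (fun x => if x 0 < t then R else R') = 2 * Φ₀ R R')
    (hF3 : ∀ R₁ R₂ R₃, R₁ ∈ SO2 → R₂ ∈ SO2 → R₃ ∈ SO2 →
      ∀ s t : ℝ, -1 < s → s < t → t < 1 →
        F (fun x => if x 0 < s then R₁ else if x 0 < t then R₂ else R₃) =
          2 * Φ₀ R₁ R₂ + 2 * Φ₀ R₂ R₃)
    (hlsc : ∀ (A : ℕ → (Fin 2 → ℝ) → Matrix (Fin 2) (Fin 2) ℝ)
        (A₀ : (Fin 2 → ℝ) → Matrix (Fin 2) (Fin 2) ℝ),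
      Tendsto (fun k => ∫ x in squareDomain, frob (A k x - A₀ x)) atTop (nhds 0) →
      F A₀ ≤ Filter.liminf (fun k => F (A k)) atTop) :
    ∀ R₁ R₂ R₃, R₁ ∈ SO2 → R₂ ∈ SO2 → R₃ ∈ SO2 →
      Φ₀ R₁ R₃ ≤ Φ₀ R₁ R₂ + Φ₀ R₂ R₃ :=
  jump_density_subadditive_general Φ₀ F hF2 hF3 hlsc
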